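/- The union α' of all pencils in the equivalence class of a pencil α is a pencil, is strictly complete, and is equivalent to α. Moreover, if the class contains a regular pencil ρ, then α' = ρ. -/

import Mathlib

/-- An incidence plane: points, lines, and an incidence relation. -/
structure IncidencePlane where
  Point : Type
  Line : Type
  mem : Point → Line → Prop

namespace IncidencePlane

variable (G : IncidencePlane)

/-- Lines `l` and `m` intersect: they are distinct and have a common point. -/
def Intersect (l m : G.Line) : Prop := l ≠ m ∧ ∃ Q, G.mem Q l ∧ G.mem Q m

/-- Parallel is the negation of intersecting. -/
def Par (l m : G.Line) : Prop := ¬ G.Intersect l m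

/-- The point set of a line. -/
def lineSet (l : G.Line) : Set G.Point := {Q | G.mem Q l}

/-- The pencil of all lines through a point `Q`, written `Q*`. -/
def pointPencil (Q : G.Point) : Set G.Line := {l | G.mem Q l}

/-- The pencil of all lines parallel to `l`, written `l*`. -/
def parPencil (l : G.Line) : Set G.Line := {m | G.Par m l}

/-- A regular pencil has the form `Q*` or `l*`. -/
def Regular (ρ : Set G.Line) : Prop :=
  (∃ Q, ρ = G.pointPencil Q) ∨ (∃ l, ρ = G.parPencil l)

/-- A pencil: (1) it cannot contain fewer than two lines; (2) two distinct
lines of it lying in a regular pencil `ρ` force inclusion in `ρ`. -/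
def IsPencil (α : Set G.Line) : Prop :=
  (¬ ∀ l ∈ α, ∀ m ∈ α, l = m) ∧
  (∀ ρ : Set G.Line, G.Regular ρ → ∀ l ∈ α, ∀ m ∈ α, l ≠ m → l ∈ ρ → m ∈ ρ → α ⊆ ρ)

/-- A complete pencil: two distinct lines of it in a regular pencil `ρ` force equality with `ρ`. -/
def Complete (α : Set G.Line) : Prop :=
  ∀ ρ : Set G.Line, G.Regular ρ → ∀ l ∈ α, ∀ m ∈ α, l ≠ m → l ∈ ρ → m ∈ ρ → α = ρ

/-- A strictly complete pencil: contained in a regular pencil implies equal to it. -/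
def StrictlyComplete (α : Set G.Line) : Prop :=
  ∀ ρ : Set G.Line, G.Regular ρ → α ⊆ ρ → α = ρ

/-- `l` lies outside the family `α`: it differs from every line of `α`. -/
def LineOutside (l : G.Line) (α : Set G.Line) : Prop := ∀ m ∈ α, l ≠ m

/-- Pencils `α` and `β` are distinct: some line of one lies outside the other. -/
def PDistinct (α β : Set G.Line) : Prop :=
  (∃ l ∈ α, G.LineOutside l β) ∨ (∃ l ∈ β, G.LineOutside l α)

/-- Pencils are equivalent when they are contained in exactly the same regular pencils. -/
def PEquiv (α β : Set G.Line) : Prop :=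
  ∀ ρ : Set G.Line, G.Regular ρ → (α ⊆ ρ ↔ β ⊆ ρ)

/-- A parallel pencil: a pencil any two of whose lines are parallel. -/
def ParallelPencil (α : Set G.Line) : Prop :=
  G.IsPencil α ∧ ∀ l ∈ α, ∀ m ∈ α, G.Par l m

/-- Point `Q` lies outside line `l`: it differs from every point of `l`. -/
def PointOutside (Q : G.Point) (l : G.Line) : Prop := ∀ R, G.mem R l → Q ≠ R

/-- The union of all pencils equivalent to `α` (the full pencil `α'`). -/
def fullPencil (α : Set G.Line) : Set G.Line :=
  ⋃₀ {β | G.IsPencil β ∧ G.PEquiv β α}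

/-- The core of two pencils: points lying on a common line of the two pencils. -/
def core (α β : Set G.Line) : Set G.Point :=
  {Q | ∃ l, l ∈ α ∩ β ∧ G.mem Q l}

/-- A virtual line: a set of points which is a line whenever it is inhabited. -/
def VLine (p : Set G.Point) : Prop :=
  p.Nonempty → ∃ l : G.Line, p = G.lineSet l

/-- Distinctness of virtual lines. -/
def VDistinct (p q : Set G.Point) : Prop :=
  ¬ (p = q) ∧ ∀ l m : G.Line, p = G.lineSet l → q = G.lineSet m → l ≠ m

/-- Equivalence of virtual lines: the negation of distinctness. -/
def VEquiv (p q : Set G.Point) : Prop := ¬ G.VDistinct p q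

/-- The union of all virtual lines equivalent to `p`. -/
def vfull (p : Set G.Point) : Set G.Point :=
  ⋃₀ {q | G.VLine q ∧ G.VEquiv q p}

/-- The axioms of an incidence plane used in this paper. -/
structure Axioms (G : IncidencePlane) : Prop where
  join : ∀ Q R : G.Point, Q ≠ R → ∃ l, G.mem Q l ∧ G.mem R l
  join_unique : ∀ Q R : G.Point, Q ≠ R → ∀ l m : G.Line,
      G.mem Q l → G.mem R l → G.mem Q m → G.mem R m → l = m
  cross_unique : ∀ l m : G.Line, l ≠ m → ∀ Q R : G.Point,
      G.mem Q l → G.mem Q m → G.mem R l → G.mem R m → Q = R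
  parPost : ∀ (Q : G.Point) (l : G.Line), ∃ n, G.mem Q n ∧ G.Par n l
  parPost_unique : ∀ (Q : G.Point) (l : G.Line) (n n' : G.Line),
      G.mem Q n → G.Par n l → G.mem Q n' → G.Par n' l → n = n'
  par_int : ∀ n₁ n₂ l m : G.Line,
      G.Par n₁ l → G.Par n₂ m → G.Intersect l m → G.Intersect n₁ n₂
  not_pointOutside : ∀ (Q : G.Point) (l : G.Line), ¬ G.PointOutside Q l → G.mem Q l
  two_points : ∀ l : G.Line, ∃ Q R : G.Point, Q ≠ R ∧ G.mem Q l ∧ G.mem R l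
  exists_intersecting : ∃ l m : G.Line, G.Intersect l m

end IncidencePlane

open IncidencePlane

/-! Any two lines lie in a regular pencil (through their common point, or parallel
to both), and two distinct lines lie in at most one regular pencil. Hence every pencil `β`
equivalent to `α` lies in the regular pencil `σ ⊇ α`, so `α' ⊆ σ`; a set of at least two lines
inside a regular pencil is a pencil, and a pencil inside a regular pencil `ρ` is equivalent to
`ρ`, which gives strict completeness. -/

namespace IncidencePlane

variable {G : IncidencePlane}

theorem Intersect.symm {l m : G.Line} (h : G.Intersect l m) : G.Intersect m l :=
  ⟨h.1.symm, h.2.imp fun _ hQ => ⟨hQ.2, hQ.1⟩⟩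

theorem Par.symm {l m : G.Line} (h : G.Par l m) : G.Par m l :=
  fun hi => h hi.symm

theorem par_refl (l : G.Line) : G.Par l l := fun hi => hi.1 rfl

theorem exists_regular_mem_mem (l m : G.Line) :
    ∃ σ, G.Regular σ ∧ l ∈ σ ∧ m ∈ σ := by
  by_cases h : G.Intersect l m
  · obtain ⟨Q, hQl, hQm⟩ := h.2
    exact ⟨G.pointPencil Q, Or.inl ⟨Q, rfl⟩, hQl, hQm⟩
  · exact ⟨G.parPencil l, Or.inr ⟨l, rfl⟩, par_refl l, Par.symm h⟩

theorem IsPencil.exists_ne {α : Set G.Line} (hα : G.IsPencil α) :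
    ∃ l ∈ α, ∃ m ∈ α, l ≠ m := by
  simpa using hα.1

theorem IsPencil.exists_regular_superset {α : Set G.Line} (hα : G.IsPencil α) :
    ∃ σ, G.Regular σ ∧ α ⊆ σ := by
  obtain ⟨l, hl, m, hm, hne⟩ := hα.exists_ne
  obtain ⟨σ, hσ, hlσ, hmσ⟩ := exists_regular_mem_mem l m
  exact ⟨σ, hσ, hα.2 σ hσ l hl m hm hne hlσ hmσ⟩

theorem IsPencil.pEquiv_of_subset {α β : Set G.Line} (hβ : G.IsPencil β) (hα : G.IsPencil α)
    (hαβ : α ⊆ β) : G.PEquiv β α := by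
  intro σ hσ
  refine ⟨hαβ.trans, fun hασ => ?_⟩
  obtain ⟨l, hl, m, hm, hne⟩ := hα.exists_ne
  exact hβ.2 σ hσ l (hαβ hl) m (hαβ hm) hne (hασ hl) (hασ hm)

theorem Axioms.exists_ne_mem_mem (ax : G.Axioms) (Q : G.Point) :
    ∃ n₁ n₂, G.mem Q n₁ ∧ G.mem Q n₂ ∧ n₁ ≠ n₂ := by
  obtain ⟨a, b, hab⟩ := ax.exists_intersecting
  obtain ⟨n₁, hn₁, hpar₁⟩ := ax.parPost Q a
  obtain ⟨n₂, hn₂, hpar₂⟩ := ax.parPost Q b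
  exact ⟨n₁, n₂, hn₁, hn₂, (ax.par_int n₁ n₂ a b hpar₁ hpar₂ hab).1⟩

theorem Axioms.exists_not_mem (ax : G.Axioms) (l : G.Line) : ∃ S, ¬ G.mem S l := by
  obtain ⟨Q, -, -, hQ, -⟩ := ax.two_points l
  obtain ⟨n₁, n₂, hn₁, hn₂, hne⟩ := ax.exists_ne_mem_mem Q
  obtain ⟨m, hQm, hml⟩ : ∃ m, G.mem Q m ∧ m ≠ l := by
    by_cases h : n₁ = l
    · exact ⟨n₂, hn₂, fun h₂ => hne (h.trans h₂.symm)⟩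
    · exact ⟨n₁, hn₁, h⟩
  obtain ⟨A, B, hAB, hA, hB⟩ := ax.two_points m
  by_contra! h
  exact hAB (ax.cross_unique m l hml A B hA (h A) hB (h B))

theorem Regular.exists_ne (ax : G.Axioms) {ρ : Set G.Line} (hρ : G.Regular ρ) :
    ∃ l ∈ ρ, ∃ m ∈ ρ, l ≠ m := by
  rcases hρ with ⟨Q, rfl⟩ | ⟨l, rfl⟩
  · obtain ⟨n₁, n₂, hn₁, hn₂, hne⟩ := ax.exists_ne_mem_mem Q
    exact ⟨n₁, hn₁, n₂, hn₂, hne⟩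
  · obtain ⟨S, hS⟩ := ax.exists_not_mem l
    obtain ⟨n, hSn, hnl⟩ := ax.parPost S l
    exact ⟨l, par_refl l, n, hnl, by rintro rfl; exact hS hSn⟩

theorem Regular.subset_of_mem_mem (ax : G.Axioms) {ρ σ : Set G.Line}
    (hρ : G.Regular ρ) (hσ : G.Regular σ) {l m : G.Line}
    (hlρ : l ∈ ρ) (hmρ : m ∈ ρ) (hne : l ≠ m) (hlσ : l ∈ σ) (hmσ : m ∈ σ) :
    ρ ⊆ σ := by
  rcases hρ with ⟨Q, rfl⟩ | ⟨a, rfl⟩ <;> rcases hσ with ⟨R, rfl⟩ | ⟨b, rfl⟩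
  · by_cases hQR : Q = R
    · rw [hQR]
    · exact absurd (ax.join_unique Q R hQR l m hlρ hlσ hmρ hmσ) hne
  · exact absurd (ax.parPost_unique Q b l m hlρ hlσ hmρ hmσ) hne
  · exact absurd (ax.parPost_unique R a l m hlσ hlρ hmσ hmρ) hne
  · intro n hna hnb
    exact hlρ (ax.par_int l a b n hlσ hna.symm hnb.symm)

theorem isPencil_of_subset_regular (ax : G.Axioms) {β σ : Set G.Line} (hσ : G.Regular σ)
    (hβσ : β ⊆ σ) (hβ : ∃ l ∈ β, ∃ m ∈ β, l ≠ m) : G.IsPencil β := by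
  refine ⟨by simpa using hβ, fun ρ hρ l hl m hm hne hlρ hmρ => ?_⟩
  exact hβσ.trans (hσ.subset_of_mem_mem ax hρ (hβσ hl) (hβσ hm) hne hlρ hmρ)

theorem Regular.isPencil (ax : G.Axioms) {ρ : Set G.Line} (hρ : G.Regular ρ) :
    G.IsPencil ρ :=
  isPencil_of_subset_regular ax hρ subset_rfl (hρ.exists_ne ax)

section fullPencil

variable {α : Set G.Line}

theorem subset_fullPencil (hα : G.IsPencil α) : α ⊆ G.fullPencil α :=
  Set.subset_sUnion_of_mem ⟨hα, fun _ _ => Iff.rfl⟩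

theorem fullPencil_subset {ρ : Set G.Line} (hρ : G.Regular ρ) (hαρ : α ⊆ ρ) :
    G.fullPencil α ⊆ ρ :=
  Set.sUnion_subset fun _ hβ => (hβ.2 ρ hρ).2 hαρ

theorem pEquiv_fullPencil (hα : G.IsPencil α) : G.PEquiv (G.fullPencil α) α :=
  fun _ hρ => ⟨(subset_fullPencil hα).trans, fullPencil_subset hρ⟩

theorem isPencil_fullPencil (ax : G.Axioms) (hα : G.IsPencil α) :
    G.IsPencil (G.fullPencil α) := by
  obtain ⟨σ, hσ, hασ⟩ := hα.exists_regular_superset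
  obtain ⟨l, hl, m, hm, hne⟩ := hα.exists_ne
  exact isPencil_of_subset_regular ax hσ (fullPencil_subset hσ hασ)
    ⟨l, subset_fullPencil hα hl, m, subset_fullPencil hα hm, hne⟩

theorem fullPencil_eq_of_pEquiv {ρ : Set G.Line} (hρ : G.Regular ρ) (hρp : G.IsPencil ρ)
    (hρα : G.PEquiv ρ α) : G.fullPencil α = ρ :=
  (fullPencil_subset hρ ((hρα ρ hρ).1 subset_rfl)).antisymm
    (Set.subset_sUnion_of_mem ⟨hρp, hρα⟩)

theorem strictlyComplete_fullPencil (ax : G.Axioms) (hα : G.IsPencil α) :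
    G.StrictlyComplete (G.fullPencil α) := by
  intro ρ hρ hαρ
  have hρp := hρ.isPencil ax
  exact fullPencil_eq_of_pEquiv hρ hρp
    (hρp.pEquiv_of_subset hα ((subset_fullPencil hα).trans hαρ))

end fullPencil

end IncidencePlane

/-- the union α' of all pencils equivalent to α is a strictly
complete pencil equivalent to α; if the class contains a regular pencil ρ,
then α' = ρ. -/
theorem fullPencil_strictly_complete (G : IncidencePlane) (ax : G.Axioms)
    (α : Set G.Line) (hα : G.IsPencil α) :
    G.IsPencil (G.fullPencil α) ∧
    G.StrictlyComplete (G.fullPencil α) ∧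
    G.PEquiv (G.fullPencil α) α ∧
    (∀ ρ : Set G.Line, G.Regular ρ → G.IsPencil ρ → G.PEquiv ρ α →
      G.fullPencil α = ρ) :=
  ⟨isPencil_fullPencil ax hα, strictlyComplete_fullPencil ax hα, pEquiv_fullPencil hα,
    fun _ hρ hρp hρα => fullPencil_eq_of_pEquiv hρ hρp hρα⟩
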